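/- On ℂ³ ∖ {0} with coordinates (x₀, x₁, x₂), set ρ(x)² := |x₀|² + |x₁|² + |x₂|² and define gⱼ(x) := conj(xⱼ) · ρ(x)⁻⁶ for j = 0, 1, 2. Then for every x ≠ 0, the sum ∂̄₀g₀(x) + ∂̄₁g₁(x) + ∂̄₂g₂(x) = 0, where ∂̄ⱼ denotes the antiholomorphic Wirtinger derivative in the j-th coordinate. -/

import Mathlib

open Complex

/-- The antiholomorphic Wirtinger derivative in the `j`-th coordinate of a complex-valued
function on `ℂ³`. -/
noncomputable def wbar (j : Fin 3) (h : (Fin 3 → ℂ) → ℂ) (x : Fin 3 → ℂ) : ℂ :=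
  (2 : ℂ)⁻¹ * (fderiv ℝ h x (Pi.single j 1) + Complex.I * fderiv ℝ h x (Pi.single j Complex.I))

/-- The norm `ρ(x)` with `ρ(x)² = |x₀|² + |x₁|² + |x₂|²`. -/
noncomputable def rho (x : Fin 3 → ℂ) : ℝ :=
  Real.sqrt (‖x 0‖ ^ 2 + ‖x 1‖ ^ 2 + ‖x 2‖ ^ 2)

/-- The coefficient functions of the Bochner–Martinelli kernel on `ℂ³`. -/
noncomputable def bm (j : Fin 3) (x : Fin 3 → ℂ) : ℂ :=
  (starRingEnd ℂ) (x j) * ((rho x : ℂ) ^ 6)⁻¹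

/-! The antiholomorphic derivative `∂̄ⱼ` is a derivation with `∂̄ⱼ xₖ = 0` and `∂̄ⱼ x̄ₖ = δⱼₖ`, and
it obeys the chain rule `∂̄ⱼ (h ∘ f) = h'(f) ∂̄ⱼ f` for holomorphic `h`. Writing `ρ² = ∑ₖ xₖ x̄ₖ`
this gives `∂̄ⱼ ρ² = xⱼ`, hence `∂̄ⱼ (x̄ⱼ ρ⁻⁶) = (ρ² - 3 |xⱼ|²) / ρ⁸`, and these three terms
sum to `(3ρ² - 3ρ²) / ρ⁸ = 0`. -/

open ComplexConjugate

section Wirtinger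

variable {f g : (Fin 3 → ℂ) → ℂ} {x : Fin 3 → ℂ} (j : Fin 3)

theorem HasFDerivAt.wbar_eq {L : (Fin 3 → ℂ) →L[ℝ] ℂ} (hf : HasFDerivAt f L x) :
    wbar j f x = 2⁻¹ * (L (Pi.single j 1) + I * L (Pi.single j I)) := by
  rw [wbar, hf.fderiv]

theorem wbar_add (hf : DifferentiableAt ℝ f x) (hg : DifferentiableAt ℝ g x) :
    wbar j (fun y => f y + g y) x = wbar j f x + wbar j g x := by
  rw [HasFDerivAt.wbar_eq j (f := fun y => f y + g y) (hf.hasFDerivAt.add hg.hasFDerivAt), wbar,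
    wbar]
  simp only [add_apply]
  ring

theorem wbar_mul (hf : DifferentiableAt ℝ f x) (hg : DifferentiableAt ℝ g x) :
    wbar j (fun y => f y * g y) x = wbar j f x * g x + f x * wbar j g x := by
  rw [HasFDerivAt.wbar_eq j (f := fun y => f y * g y) (hf.hasFDerivAt.mul hg.hasFDerivAt), wbar,
    wbar]
  simp only [add_apply, smul_apply, smul_eq_mul]
  ring

theorem wbar_comp_of_hasDerivAt {h : ℂ → ℂ} {h' : ℂ} (hh : HasDerivAt h h' (f x))
    (hf : DifferentiableAt ℝ f x) : wbar j (fun y => h (f y)) x = h' * wbar j f x := by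
  rw [HasFDerivAt.wbar_eq j (f := fun y => h (f y))
    ((hh.hasFDerivAt.restrictScalars ℝ).comp x hf.hasFDerivAt), wbar]
  simp only [ContinuousLinearMap.comp_apply, ContinuousLinearMap.coe_restrictScalars',
    ContinuousLinearMap.toSpanSingleton_apply, smul_eq_mul]
  ring

theorem wbar_apply (k : Fin 3) : wbar j (fun y => y k) x = 0 := by
  rw [(hasFDerivAt_apply k x).wbar_eq]
  rcases eq_or_ne j k with rfl | hjk
  · simp
  · simp [hjk.symm]

theorem wbar_conj_apply (k : Fin 3) :
    wbar j (fun y => conj (y k)) x = if j = k then 1 else 0 := by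
  rw [HasFDerivAt.wbar_eq j (f := fun y => conj (y k))
    (conjCLE.hasFDerivAt.comp x (hasFDerivAt_apply k x))]
  rcases eq_or_ne j k with rfl | hjk
  · norm_num
  · simp [hjk, hjk.symm]

theorem wbar_mul_conj_apply (k : Fin 3) :
    wbar j (fun y => y k * conj (y k)) x = if j = k then x k else 0 := by
  rw [wbar_mul j (by fun_prop) (by fun_prop), wbar_apply, wbar_conj_apply]
  simp

end Wirtinger

noncomputable def rhoSq (x : Fin 3 → ℂ) : ℂ :=
  x 0 * conj (x 0) + x 1 * conj (x 1) + x 2 * conj (x 2)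

theorem ofReal_rho_sq (x : Fin 3 → ℂ) : ((rho x : ℝ) : ℂ) ^ 2 = rhoSq x := by
  rw [rho, ← ofReal_pow, Real.sq_sqrt (by positivity), rhoSq]
  simp only [mul_conj, normSq_eq_norm_sq]
  push_cast
  ring

theorem rho_pos {x : Fin 3 → ℂ} (hx : x ≠ 0) : 0 < rho x := by
  obtain ⟨k, hk⟩ := Function.ne_iff.mp hx
  have hk : 0 < ‖x k‖ ^ 2 := by positivity
  rw [rho, Real.sqrt_pos]
  fin_cases k <;> dsimp at hk <;> positivity

theorem rhoSq_ne_zero {x : Fin 3 → ℂ} (hx : x ≠ 0) : rhoSq x ≠ 0 := by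
  rw [← ofReal_rho_sq]
  exact pow_ne_zero 2 (ofReal_ne_zero.mpr (rho_pos hx).ne')

theorem bm_eq_rhoSq (j : Fin 3) : bm j = fun y => conj (y j) * (rhoSq y ^ 3)⁻¹ := by
  ext y
  rw [bm, ← ofReal_rho_sq, ← pow_mul]

theorem differentiable_rhoSq : Differentiable ℝ rhoSq := by
  unfold rhoSq
  fun_prop

theorem wbar_rhoSq (j : Fin 3) (x : Fin 3 → ℂ) : wbar j rhoSq x = x j := by
  change wbar j (fun y => (y 0 * conj (y 0) + y 1 * conj (y 1)) + y 2 * conj (y 2)) x = x j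
  rw [wbar_add j (by fun_prop) (by fun_prop), wbar_add j (by fun_prop) (by fun_prop)]
  simp only [wbar_mul_conj_apply]
  fin_cases j <;> simp

theorem wbar_bm (j : Fin 3) {x : Fin 3 → ℂ} (hx : x ≠ 0) :
    wbar j (bm j) x = (rhoSq x - 3 * (x j * conj (x j))) / rhoSq x ^ 4 := by
  have hρ := rhoSq_ne_zero hx
  rw [bm_eq_rhoSq, wbar_mul j (g := fun y => (rhoSq y ^ 3)⁻¹) (by fun_prop)
      ((differentiable_rhoSq x).pow 3 |>.inv (pow_ne_zero 3 hρ)),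
    wbar_comp_of_hasDerivAt j (h := fun z => (z ^ 3)⁻¹)
      ((hasDerivAt_pow 3 _).inv (pow_ne_zero 3 hρ)) (differentiable_rhoSq x),
    wbar_conj_apply, wbar_rhoSq, if_pos rfl]
  field_simp
  ring

/-- The Bochner–Martinelli kernel on `ℂ³` is `∂̄`-closed away from the origin:
`∑ⱼ ∂̄ⱼ (x̄ⱼ · ρ(x)⁻⁶) = 0` for `x ≠ 0`. -/
theorem bochnerMartinelli_dbar_closed (x : Fin 3 → ℂ) (hx : x ≠ 0) :
    wbar 0 (bm 0) x + wbar 1 (bm 1) x + wbar 2 (bm 2) x = 0 := by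
  rw [wbar_bm 0 hx, wbar_bm 1 hx, wbar_bm 2 hx, rhoSq]
  ring
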